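/- Let ν be a Borel probability measure on ℝ^d, let λ > 0, r > 0, and define F(λ, r) = {x : ν(B(x, 2r)) > λ·ν(B(x, r))}. Then there exists a constant C > 0 depending only on the dimension d (and not on r, λ, or ν) such that ν(F(λ, r)) ≤ C/λ. -/

import Mathlib

/-!
By the Besicovitch covering theorem, `F(λ, r)` is covered by the balls `B(x, r)`, `x ∈ F(λ, r)`,
of `N` subfamilies, each consisting of pairwise disjoint balls, with `N` depending only on the
dimension. For `x ∈ F(λ, r)` we have `ν(B(x, r)) ≤ ν(B(x, 2r)) / λ`. Within one subfamily every
point lies in at most `3^d` of the doubled balls `B(x, 2r)` (the disjoint balls `B(x, r)` then all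
sit inside a ball of radius `3r`; compare Lebesgue measures), so the `ν(B(x, 2r))` of a subfamily
add up to at most `3^d`. Hence `ν(F(λ, r)) ≤ N 3^d / λ`.
-/

open MeasureTheory Metric Set ENNReal Module

lemma ENNReal.le_div_of_mul_lt {a b c : ℝ≥0∞} (h : a * b < c) : b ≤ c / a := by
  rcases eq_or_ne a ∞ with rfl | ha
  · rcases eq_or_ne b 0 with rfl | hb
    · exact zero_le
    · simp [top_mul hb] at h
  · exact (ENNReal.le_div_iff_mul_le (Or.inr h.ne_bot) (Or.inl ha)).2 (mul_comm a b ▸ h.le)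

lemma Set.PairwiseDisjoint.countable_of_closedBall {α : Type*} [MetricSpace α]
    [TopologicalSpace.SeparableSpace α] {s : Set α} {r : ℝ} (hr : 0 < r)
    (h : s.PairwiseDisjoint (closedBall · r)) : s.Countable :=
  (h.mono fun _ => ball_subset_closedBall).countable_of_isOpen (fun _ _ => isOpen_ball)
    fun _ _ => nonempty_ball.2 hr

theorem tsum_indicator_closedBall_eq_encard {α : Type*} [MetricSpace α] (s : Set α) (r : ℝ)
    (y : α) :
    ∑' x : s, (closedBall (x : α) r).indicator (1 : α → ℝ≥0∞) y
      = ((s ∩ closedBall y r).encard : ℝ≥0∞) := by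
  rw [← ENNReal.tsum_set_one, tsum_subtype s fun x => (closedBall x r).indicator (1 : α → ℝ≥0∞) y,
    tsum_subtype (s ∩ closedBall y r) fun _ => (1 : ℝ≥0∞)]
  congr 1 with x
  by_cases hx : x ∈ s <;> simp [hx, Set.indicator, dist_comm]

section FiniteDimensional

variable {E : Type*} [NormedAddCommGroup E] [NormedSpace ℝ E] [FiniteDimensional ℝ E]

theorem encard_inter_closedBall_two_mul_le {s : Set E} {r : ℝ} (hr : 0 < r)
    (hs : s.PairwiseDisjoint (closedBall · r)) (y : E) :
    (s ∩ closedBall y (2 * r)).encard ≤ 3 ^ finrank ℝ E := by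
  borelize E
  set t := s ∩ closedBall y (2 * r)
  let μ : Measure E := Measure.addHaar
  set V := μ (closedBall 0 r)
  have hV : V ≠ 0 := (measure_closedBall_pos μ 0 hr).ne'
  have hVtop : V ≠ ∞ := measure_closedBall_lt_top.ne
  have hball : ∀ x, μ (closedBall x r) = V := fun x => by
    simp only [V, Measure.addHaar_closedBall_center]
  have hsub : (⋃ x ∈ t, closedBall x r) ⊆ closedBall y (3 * r) := by
    refine iUnion₂_subset fun x hx z hz => ?_
    rw [mem_closedBall] at hz ⊢
    linarith [dist_triangle z x y, mem_closedBall.1 hx.2]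
  have h3r : μ (closedBall y (3 * r)) = 3 ^ finrank ℝ E * V := by
    rw [Measure.addHaar_closedBall_mul μ y (by norm_num) hr.le, Measure.addHaar_closedBall_center,
      ENNReal.ofReal_pow (by norm_num), ENNReal.ofReal_ofNat]
  have htdisj : t.PairwiseDisjoint (closedBall · r) := hs.subset inter_subset_left
  suffices (t.encard : ℝ≥0∞) * V ≤ 3 ^ finrank ℝ E * V by
    exact_mod_cast (ENNReal.mul_le_mul_iff_left hV hVtop).1 this
  calc (t.encard : ℝ≥0∞) * V = ∑' x : t, μ (closedBall x r) := by
        simp only [hball, ENNReal.tsum_set_const]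
    _ = μ (⋃ x ∈ t, closedBall x r) :=
        (measure_biUnion (htdisj.countable_of_closedBall hr) htdisj
          fun _ _ => measurableSet_closedBall).symm
    _ ≤ 3 ^ finrank ℝ E * V := h3r ▸ measure_mono hsub

theorem tsum_measure_closedBall_two_mul_le [MeasurableSpace E] [BorelSpace E] (ν : Measure E)
    {s : Set E} {r : ℝ} (hr : 0 < r) (hs : s.PairwiseDisjoint (closedBall · r)) :
    ∑' x : s, ν (closedBall x (2 * r)) ≤ 3 ^ finrank ℝ E * ν univ := by
  have := (hs.countable_of_closedBall hr).to_subtype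
  calc ∑' x : s, ν (closedBall x (2 * r))
      = ∑' x : s, ∫⁻ y, (closedBall (x : E) (2 * r)).indicator 1 y ∂ν := by
        simp only [lintegral_indicator_one measurableSet_closedBall]
    _ = ∫⁻ y, ((s ∩ closedBall y (2 * r)).encard : ℝ≥0∞) ∂ν := by
        rw [← lintegral_tsum fun _ =>
          (measurable_one.indicator measurableSet_closedBall).aemeasurable]
        simp only [tsum_indicator_closedBall_eq_encard]
    _ ≤ ∫⁻ _, 3 ^ finrank ℝ E ∂ν := lintegral_mono fun y =>
        (ENat.toENNReal_le.2 (encard_inter_closedBall_two_mul_le hr hs y)).trans_eq (by simp)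
    _ = 3 ^ finrank ℝ E * ν univ := lintegral_const _

end FiniteDimensional

theorem Besicovitch.exists_disjoint_covering_families_closedBall {α : Type*} [MetricSpace α]
    [HasBesicovitchCovering α] :
    ∃ N : ℕ, ∀ (F : Set α) {r : ℝ}, 0 < r → ∃ s : Fin N → Set α, (∀ i, s i ⊆ F) ∧
      (∀ i, (s i).PairwiseDisjoint (closedBall · r)) ∧ F ⊆ ⋃ i, ⋃ x ∈ s i, ball x r := by
  obtain ⟨N, τ, hτ, hN⟩ := HasBesicovitchCovering.no_satelliteConfig (α := α)
  refine ⟨N, fun F r hr => ?_⟩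
  let q : BallPackage F α :=
    { c := (↑), r := fun _ => r, rpos := fun _ => hr, r_bound := r, r_le := fun _ => le_rfl }
  obtain ⟨s, hdisj, hcover⟩ := exist_disjoint_covering_families hτ hN q
  refine ⟨fun i => (↑) '' s i, by rintro i _ ⟨x, -, rfl⟩; exact x.2, fun i => ?_, ?_⟩
  · exact (Subtype.val_injective.injOn.pairwiseDisjoint_image).2 (hdisj i)
  · intro x hx
    simpa only [biUnion_image] using hcover ⟨⟨x, hx⟩, rfl⟩

theorem exists_measure_setOf_lt_measure_closedBall_two_mul_le (E : Type*) [NormedAddCommGroup E]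
    [NormedSpace ℝ E] [FiniteDimensional ℝ E] [MeasurableSpace E] [BorelSpace E] :
    ∃ N : ℕ, ∀ (ν : Measure E) (a : ℝ≥0∞) {r : ℝ}, 0 < r →
      ν {x | a * ν (closedBall x r) < ν (closedBall x (2 * r))}
        ≤ N * 3 ^ finrank ℝ E * ν univ / a := by
  obtain ⟨N, hN⟩ := Besicovitch.exists_disjoint_covering_families_closedBall (α := E)
  refine ⟨N, fun ν a r hr => ?_⟩
  obtain ⟨s, hsF, hdisj, hcover⟩ := hN {x | a * ν (closedBall x r) < ν (closedBall x (2 * r))} hr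
  have hfamily : ∀ i, ν (⋃ x ∈ s i, ball x r) ≤ 3 ^ finrank ℝ E * ν univ / a := fun i =>
    calc ν (⋃ x ∈ s i, ball x r)
        ≤ ∑' x : s i, ν (ball x r) := measure_biUnion_le ν ((hdisj i).countable_of_closedBall hr) _
      _ ≤ ∑' x : s i, ν (closedBall x (2 * r)) / a := ENNReal.tsum_le_tsum fun x =>
          (measure_mono ball_subset_closedBall).trans (ENNReal.le_div_of_mul_lt (hsF i x.2))
      _ = (∑' x : s i, ν (closedBall x (2 * r))) / a := by
          simp only [div_eq_mul_inv, ENNReal.tsum_mul_right]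
      _ ≤ 3 ^ finrank ℝ E * ν univ / a :=
          ENNReal.div_le_div_right (tsum_measure_closedBall_two_mul_le ν hr (hdisj i)) a
  calc _ ≤ ν (⋃ i, ⋃ x ∈ s i, ball x r) := measure_mono hcover
    _ ≤ ∑ i, ν (⋃ x ∈ s i, ball x r) := measure_iUnion_fintype_le ν _
    _ ≤ ∑ _i : Fin N, 3 ^ finrank ℝ E * ν univ / a := Finset.sum_le_sum fun i _ => hfamily i
    _ = N * 3 ^ finrank ℝ E * ν univ / a := by simp [mul_div_assoc, mul_assoc]

theorem stmt_3 (d : ℕ) :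
    ∃ C : ℝ, 0 < C ∧
      ∀ (ν : MeasureTheory.Measure (EuclideanSpace ℝ (Fin d)))
        [MeasureTheory.IsProbabilityMeasure ν] (lam r : ℝ), 0 < lam → 0 < r →
        ν {x | ENNReal.ofReal lam * ν (Metric.closedBall x r) <
                ν (Metric.closedBall x (2 * r))}
          ≤ ENNReal.ofReal (C / lam) := by
  obtain ⟨N, hN⟩ :=
    exists_measure_setOf_lt_measure_closedBall_two_mul_le (EuclideanSpace ℝ (Fin d))
  -- the `+ 1` keeps `C` positive should the Besicovitch constant `N` be `0`
  refine ⟨N * 3 ^ d + 1, by positivity, fun ν _ lam r hlam hr => ?_⟩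
  have hconst : ((N * 3 ^ d : ℕ) : ℝ≥0∞) ≤ ENNReal.ofReal (N * 3 ^ d + 1) := by
    rw [← ENNReal.ofReal_natCast]
    exact ENNReal.ofReal_le_ofReal (by push_cast; linarith)
  calc _ ≤ N * 3 ^ d * ν univ / ENNReal.ofReal lam := by
        simpa only [finrank_euclideanSpace_fin] using hN ν (ENNReal.ofReal lam) hr
    _ ≤ ENNReal.ofReal (N * 3 ^ d + 1) / ENNReal.ofReal lam := by
        rw [measure_univ, mul_one]
        exact ENNReal.div_le_div_right (mod_cast hconst) _
    _ = ENNReal.ofReal ((N * 3 ^ d + 1) / lam) := (ENNReal.ofReal_div_of_pos hlam).symm
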